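/- arXiv:1105.0388 — 5 statements merged into one kernel-verified Lean document; each statement's English description precedes it below -/
import Mathlib

section
/- Let N ≥ 1, let α_1,…,α_N, β_1,…,β_N be complex numbers with |α_r| < 1 and 0 < |β_r| < 1 for all r, with the β_r pairwise distinct; let 0 = k_1 < k_2 < … < k_N and l_1 < l_2 < … < l_N be integers with l_N ≤ N−1, and assume h_{k_1,…,k_N}(β) ≠ 0 and h_{l_1,…,l_N}(1/β) ≠ 0. Then for all integers s_1, s_2 with 0 ≤ s_1, s_2 ≤ N and all x_1, x_2 ∈ ℕ one has the identity: −1_{s_1>s_2}·(1/2πi)∮_{|z|=1} ∏_{j=s_2+1}^{s_1} F_j(z) · z^{−(x_1−x_2+1)} dz + Σ_{j=1}^N [∏_{r=1}^N(1−α_r β_j) · ∏_{s=1,s≠j}^N(1−β_s/β_j)] / [h_{k_1,…,k_N}(β) · h_{l_1,…,l_N}(1/β)] · [(1/2πi)∮_{|z|=1} h_{k_1,…,k_N}(β; β_j↦z) ∏_{ℓ=1}^{s_1} F_ℓ(z) z^{−(x_1+1)} dz] · [(1/2πi)∮_{|z|=1} h_{l_1,…,l_N}(1/β; 1/β_j↦1/z)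 ∏_{ℓ=s_2+1}^{2N} F_ℓ(z) z^{x_2−1} dz] = −1_{s_1>s_2}·(1/2πi)∮_{|z|=1} ∏_{j=s_2+1}^{s_1}(1−α_j z)^{−1} z^{−(x_1−x_2+1)} dz + Σ_{j=1}^N (1/2πi)∮_{|z|=1} [h_{k_1,…,k_N}(β; β_j↦z)/h_{k_1,…,k_N}(β)] · ∏_{r=1}^{s_2}(1−α_r β_j) · β_j^{x_2} · ∏_{ℓ=1}^{s_1}(1−α_ℓ z)^{−1} z^{−(x_1+1)} dz. -/
/-!
Fix `j`. On the unit circle `∏_{ℓ > N} F_ℓ(z) = z^N / ∏_r (z - β_r)`, and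
`z^{N-1} h_λ(1/β; 1/β_j ↦ 1/z)` is a polynomial in `z` (because `λ_i ≤ λ_N ≤ N - 1`) that
vanishes at every `β_r` with `r ≠ j`, where two of its columns coincide. By partial fractions
and Cauchy's formula the `λ`-integral is therefore the single residue at `β_j`, namely
`β_j^{x₂+N-1} h_λ(1/β) ∏_{s₂<ℓ≤N} (1 - α_ℓ β_j)⁻¹ / ∏_{s≠j} (β_j - β_s)`. Multiplied by the
Eynard–Mehta weight it collapses to `∏_{r≤s₂} (1 - α_r β_j) β_j^{x₂} / h_κ(β)`, which is the
constant pulled out of the `j`-th integral on the right.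
-/

/-- The alternating determinant `h_{κ(1),…,κ(N)}(β) = det(β_j^{κ_i})_{i,j=1}^N`, where the
sequences `κ` (integer exponents) and `β` are 1-indexed. -/
noncomputable def hdet (N : ℕ) (κ : ℕ → ℤ) (β : ℕ → ℂ) : ℂ :=
  Matrix.det (Matrix.of fun i j : Fin N => β ((j : ℕ) + 1) ^ κ ((i : ℕ) + 1))

/-- The determinant `h_{κ(1),…,κ(N)}(β; β_{j₀} ↦ z)`: the matrix `(β_j^{κ_i})` with the
`j₀`-th column replaced by `(z^{κ_i})_i`. -/
noncomputable def hdetSub (N : ℕ) (κ : ℕ → ℤ) (β : ℕ → ℂ) (j₀ : ℕ) (z : ℂ) : ℂ :=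
  Matrix.det (Matrix.of fun i j : Fin N =>
    if (j : ℕ) + 1 = j₀ then z ^ κ ((i : ℕ) + 1) else β ((j : ℕ) + 1) ^ κ ((i : ℕ) + 1))

/-- The generating functions `F_ℓ` of the transition probabilities:
`F_ℓ(z) = (1−α_ℓ z)^{−1}` for `1 ≤ ℓ ≤ N` and `F_ℓ(z) = (1−β_{2N−ℓ+1}/z)^{−1}` for
`N+1 ≤ ℓ ≤ 2N`. -/
noncomputable def Ffun (N : ℕ) (α β : ℕ → ℂ) (ℓ : ℕ) (z : ℂ) : ℂ :=
  if ℓ ≤ N then (1 - α ℓ * z)⁻¹ else (1 - β (2 * N - ℓ + 1) / z)⁻¹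

open Finset Metric Real Complex Lagrange

theorem inv_prod_sub_eq_sum_nodalWeight {ι F : Type*} [DecidableEq ι] [Field F] {s : Finset ι}
    {v : ι → F} (hvs : Set.InjOn v s) (hs : s.Nonempty) {x : F} (hx : ∀ i ∈ s, x ≠ v i) :
    (∏ i ∈ s, (x - v i))⁻¹ = ∑ i ∈ s, nodalWeight s v i * (x - v i)⁻¹ := by
  have h := eval_interpolate_not_at_node 1 hx
  simp only [interpolate_one hvs hs, Polynomial.eval_one, eval_nodal, Pi.one_apply,
    mul_one] at h
  exact inv_eq_of_mul_eq_one_right h.symm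

theorem circleIntegral_inv_prod_sub_mul {ι : Type*} [DecidableEq ι] {c : ℂ} {R : ℝ}
    {g : ℂ → ℂ} (hg : DiffContOnCl ℂ g (ball c R)) {s : Finset ι} {v : ι → ℂ}
    (hvs : Set.InjOn v s) (hs : s.Nonempty) (hv : ∀ i ∈ s, v i ∈ ball c R) :
    (∮ z in C(c, R), (∏ i ∈ s, (z - v i))⁻¹ * g z)
      = 2 * π * I * ∑ i ∈ s, nodalWeight s v i * g (v i) := by
  have hR : 0 < R := pos_of_mem_ball (hv _ hs.choose_spec)
  have hoff : ∀ i ∈ s, ∀ z ∈ sphere c R, z ≠ v i := fun i hi z hz h =>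
    (mem_ball.1 (hv i hi)).ne (h ▸ mem_sphere.1 hz)
  have hgc : ContinuousOn g (sphere c R) :=
    hg.continuousOn.mono (sphere_subset_closedBall.trans (closure_ball c hR.ne').ge)
  have hint : ∀ i ∈ s, CircleIntegrable (fun z => nodalWeight s v i * ((z - v i)⁻¹ * g z)) c R :=
    fun i hi => (continuousOn_const.mul (((continuousOn_id.sub continuousOn_const).inv₀
      fun z hz => sub_ne_zero.2 (hoff i hi z hz)).mul hgc)).circleIntegrable hR.le
  calc (∮ z in C(c, R), (∏ i ∈ s, (z - v i))⁻¹ * g z)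
      = ∮ z in C(c, R), ∑ i ∈ s, nodalWeight s v i * ((z - v i)⁻¹ * g z) :=
        circleIntegral.integral_congr hR.le fun z hz => by
          simp only [inv_prod_sub_eq_sum_nodalWeight hvs hs (fun i hi => hoff i hi z hz),
            sum_mul, mul_assoc]
    _ = ∑ i ∈ s, nodalWeight s v i * ∮ z in C(c, R), (z - v i)⁻¹ * g z := by
        simp only [circleIntegral.integral_fun_sum hint, circleIntegral.integral_const_mul]
    _ = 2 * π * I * ∑ i ∈ s, nodalWeight s v i * g (v i) := by
        rw [mul_sum]
        refine sum_congr rfl fun i hi => ?_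
        have := hg.circleIntegral_sub_inv_smul (hv i hi)
        simp only [smul_eq_mul] at this
        rw [this]
        ring

section Determinants

variable {N : ℕ} (κ : ℕ → ℤ) (γ : ℕ → ℂ)

theorem hdetSub_self (j : Fin N) : hdetSub N κ γ (j + 1) (γ (j + 1)) = hdet N κ γ := by
  unfold hdetSub hdet
  congr 1
  ext i c
  simp only [Matrix.of_apply]
  split_ifs with h
  · rw [h]
  · rfl

theorem hdetSub_of_ne {j r : Fin N} (h : r ≠ j) : hdetSub N κ γ (j + 1) (γ (r + 1)) = 0 :=
  Matrix.det_zero_of_column_eq h fun i => by simp [Fin.val_eq_val, h]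

theorem hdetSub_eq_det_updateCol (j : Fin N) (z : ℂ) :
    hdetSub N κ γ (j + 1) z = ((Matrix.of fun i c : Fin N => γ (c + 1) ^ κ (i + 1)).updateCol j
      fun i => z ^ κ (i + 1)).det := by
  unfold hdetSub
  congr 1
  ext i c
  simp [Matrix.updateCol_apply, Fin.val_eq_val]

/-- `z ^ (N - 1) * h_κ(γ; γ_j ↦ 1/z)` with the power absorbed into column `j`, so that it is a
polynomial in `z` when all `κ_i ≤ N - 1`. -/
noncomputable def hdetSubPoly (j : Fin N) (z : ℂ) : ℂ :=
  ((Matrix.of fun i c : Fin N => γ (c + 1) ^ κ (i + 1)).updateCol j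
    fun i => z ^ ((N : ℤ) - 1 - κ (i + 1)).toNat).det

theorem differentiable_hdetSubPoly (j : Fin N) : Differentiable ℂ (hdetSubPoly κ γ j) := by
  unfold hdetSubPoly
  simp only [Matrix.det_apply, Matrix.updateCol_apply, Matrix.of_apply]
  refine Differentiable.fun_sum fun σ _ =>
    (Differentiable.fun_finsetProd fun c _ => ?_).const_smul _
  split_ifs <;> fun_prop

theorem hdetSubPoly_eq (hκ : ∀ i ∈ Icc 1 N, κ i ≤ (N : ℤ) - 1) (j : Fin N) {z : ℂ} (hz : z ≠ 0) :
    hdetSubPoly κ γ j z = z ^ (N - 1) * hdetSub N κ γ (j + 1) z⁻¹ := by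
  have hcol : (fun i : Fin N => z ^ ((N : ℤ) - 1 - κ (i + 1)).toNat)
      = z ^ (N - 1) • fun i : Fin N => z⁻¹ ^ κ (i + 1) := by
    funext i
    have hi := hκ (i + 1) (by simp)
    rw [Pi.smul_apply, smul_eq_mul, ← zpow_natCast, Int.toNat_of_nonneg (by omega),
      inv_zpow', ← zpow_natCast, ← zpow_add₀ hz]
    congr 1
    have := i.isLt
    push_cast [Nat.cast_sub (show 1 ≤ N by omega)]
    omega
  rw [hdetSubPoly, hcol, Matrix.det_updateCol_smul, hdetSub_eq_det_updateCol]

end Determinants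

section GeneratingFunctions

variable {N : ℕ} {α β : ℕ → ℂ}

theorem Ffun_of_le {ℓ : ℕ} (h : ℓ ≤ N) (z : ℂ) : Ffun N α β ℓ z = (1 - α ℓ * z)⁻¹ := if_pos h

theorem prod_Ffun_eq_of_le {s : Finset ℕ} (hs : ∀ ℓ ∈ s, ℓ ≤ N) (z : ℂ) :
    ∏ ℓ ∈ s, Ffun N α β ℓ z = ∏ ℓ ∈ s, (1 - α ℓ * z)⁻¹ :=
  prod_congr rfl fun ℓ hℓ => Ffun_of_le (hs ℓ hℓ) z

theorem prod_Ffun_Ioc_self_two_mul {z : ℂ} (hz : z ≠ 0) :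
    ∏ ℓ ∈ Ioc N (2 * N), Ffun N α β ℓ z = z ^ N * (∏ r ∈ Icc 1 N, (z - β r))⁻¹ := by
  have hreflect : ∏ ℓ ∈ Ioc N (2 * N), Ffun N α β ℓ z = ∏ r ∈ Icc 1 N, (1 - β r / z)⁻¹ :=
    prod_nbij' (fun ℓ => 2 * N + 1 - ℓ) (fun r => 2 * N + 1 - r)
      (fun ℓ hℓ => by simp only [mem_Ioc, mem_Icc] at *; omega)
      (fun r hr => by simp only [mem_Ioc, mem_Icc] at *; omega)
      (fun ℓ hℓ => by simp only [mem_Ioc] at hℓ; omega)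
      (fun r hr => by simp only [mem_Icc] at hr; omega)
      (fun ℓ hℓ => by
        simp only [mem_Ioc] at hℓ
        rw [Ffun, if_neg (by omega), show 2 * N - ℓ + 1 = 2 * N + 1 - ℓ by omega])
  have hfactor : ∀ r ∈ Icc 1 N, (1 - β r / z)⁻¹ = z * (z - β r)⁻¹ := fun r _ => by
    rw [one_sub_div hz, inv_div, div_eq_mul_inv]
  rw [hreflect, prod_congr rfl hfactor, prod_mul_distrib, prod_const, Nat.card_Icc,
    Nat.add_sub_cancel, prod_inv_distrib]

theorem prod_Ffun_Icc_succ_two_mul {s : ℕ} (hs : s ≤ N) {z : ℂ} (hz : z ≠ 0) :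
    ∏ ℓ ∈ Icc (s + 1) (2 * N), Ffun N α β ℓ z
      = (∏ ℓ ∈ Ioc s N, (1 - α ℓ * z)⁻¹) * (z ^ N * (∏ r ∈ Icc 1 N, (z - β r))⁻¹) := by
  rw [Icc_add_one_left_eq_Ioc, ← prod_Ioc_consecutive _ hs (by omega : N ≤ 2 * N),
    prod_Ffun_Ioc_self_two_mul hz, prod_Ffun_eq_of_le fun ℓ hℓ => (mem_Ioc.1 hℓ).2]

end GeneratingFunctions

theorem one_sub_mul_ne_zero_of_norm_lt {a z : ℂ} (ha : ‖a‖ < 1) (hz : ‖z‖ ≤ 1) : 1 - a * z ≠ 0 := by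
  refine sub_ne_zero.2 fun h => ?_
  have : ‖a * z‖ < 1 := by
    rw [norm_mul]
    exact (mul_le_of_le_one_right (norm_nonneg a) hz).trans_lt ha
  rw [← h, norm_one] at this
  exact this.false

theorem circleIntegral_hdetSub_inv_mul_prod_Ffun {N : ℕ} {α β : ℕ → ℂ} {lam : ℕ → ℤ}
    {s : ℕ} (hs : s ≤ N) (hα : ∀ ℓ ∈ Ioc s N, ‖α ℓ‖ < 1)
    (hβ : ∀ r ∈ Icc 1 N, β r ≠ 0 ∧ ‖β r‖ < 1) (hinj : Set.InjOn β (Icc 1 N))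
    (hlam : ∀ i ∈ Icc 1 N, lam i ≤ (N : ℤ) - 1) (x : ℕ) (j : Fin N) :
    (∮ z in C(0, 1), hdetSub N lam (fun i => (β i)⁻¹) (j + 1) z⁻¹ *
        (∏ ℓ ∈ Icc (s + 1) (2 * N), Ffun N α β ℓ z) * z ^ ((x : ℤ) - 1))
      = 2 * π * I * (nodalWeight (Icc 1 N) β (j + 1) * (β (j + 1) ^ x *
          (β (j + 1) ^ (N - 1) * hdet N lam (fun i => (β i)⁻¹)) *
          ∏ ℓ ∈ Ioc s N, (1 - α ℓ * β (j + 1))⁻¹)) := by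
  set g : ℂ → ℂ := fun z => z ^ x * hdetSubPoly lam (fun i => (β i)⁻¹) j z *
    ∏ ℓ ∈ Ioc s N, (1 - α ℓ * z)⁻¹ with hg
  have hgd : DiffContOnCl ℂ g (ball 0 1) := by
    refine DifferentiableOn.diffContOnCl (DifferentiableOn.mono ?_ closure_ball_subset_closedBall)
    refine ((differentiable_pow x).mul (differentiable_hdetSubPoly _ _ j)).differentiableOn.mul
      (DifferentiableOn.fun_finsetProd fun ℓ hℓ => DifferentiableOn.inv (by fun_prop) ?_)
    exact fun z hz => one_sub_mul_ne_zero_of_norm_lt (hα ℓ hℓ) (mem_closedBall_zero_iff.1 hz)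
  have hintegrand : Set.EqOn (fun z => hdetSub N lam (fun i => (β i)⁻¹) (j + 1) z⁻¹ *
        (∏ ℓ ∈ Icc (s + 1) (2 * N), Ffun N α β ℓ z) * z ^ ((x : ℤ) - 1))
      (fun z => (∏ r ∈ Icc 1 N, (z - β r))⁻¹ * g z) (sphere 0 1) := by
    intro z hz
    have hz0 : z ≠ 0 := ne_zero_of_mem_unit_sphere ⟨z, hz⟩
    have hpow : z ^ N * z ^ ((x : ℤ) - 1) = z ^ x * z ^ (N - 1) := by
      have := j.isLt
      rw [zpow_sub_one₀ hz0, zpow_natCast, ← Nat.sub_add_cancel (show 1 ≤ N by omega), pow_succ,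
        Nat.add_sub_cancel]
      field_simp
    simp only [hg, prod_Ffun_Icc_succ_two_mul hs hz0, hdetSubPoly_eq _ _ hlam j hz0]
    linear_combination (hdetSub N lam (fun i => (β i)⁻¹) (j + 1) z⁻¹ *
      (∏ ℓ ∈ Ioc s N, (1 - α ℓ * z)⁻¹) * (∏ r ∈ Icc 1 N, (z - β r))⁻¹) * hpow
  have hj : (j : ℕ) + 1 ∈ Icc 1 N := mem_Icc.2 ⟨by omega, j.isLt⟩
  rw [circleIntegral.integral_congr zero_le_one hintegrand,
    circleIntegral_inv_prod_sub_mul hgd hinj ⟨_, hj⟩ fun r hr => mem_ball_zero_iff.2 (hβ r hr).2,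
    sum_eq_single_of_mem _ hj fun r hr hne => ?_]
  · have hself := hdetSub_self lam (fun i => (β i)⁻¹) j
    simp only [hg, hdetSubPoly_eq _ _ hlam j (hβ _ hj).1, hself]
  · obtain ⟨r, rfl⟩ : ∃ r' : Fin N, (r' : ℕ) + 1 = r :=
      ⟨⟨r - 1, by simp only [mem_Icc] at hr; omega⟩, by simp only [mem_Icc] at hr ⊢; omega⟩
    have hzero := hdetSub_of_ne lam (fun i => (β i)⁻¹) (j := j) (r := r)
      fun h => hne (by rw [h])
    simp only [hg, hdetSubPoly_eq _ _ hlam j (hβ _ hr).1, hzero, mul_zero, zero_mul]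

theorem nodalWeight_mul_prod_one_sub_div {ι F : Type*} [DecidableEq ι] [Field F] {s : Finset ι}
    {v : ι → F}
    (hvs : Set.InjOn v s) {j : ι} (hj : j ∈ s) (hvj : v j ≠ 0) :
    nodalWeight s v j * ∏ i ∈ s.erase j, (1 - v i / v j) = (v j ^ (#s - 1))⁻¹ := by
  rw [nodalWeight, ← prod_mul_distrib, ← card_erase_of_mem hj, ← prod_const, ← prod_inv_distrib]
  refine prod_congr rfl fun i hi => ?_
  have hne : v j - v i ≠ 0 :=
    sub_ne_zero.2 fun h => (ne_of_mem_erase hi) (hvs (mem_of_mem_erase hi) hj h.symm)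
  field_simp

theorem eynardMehta_weight_mul_residue {N t : ℕ} (ht : t ≤ N) {α β : ℕ → ℂ} {j : ℕ}
    (hj : j ∈ Icc 1 N) (hinj : Set.InjOn β (Icc 1 N)) (hβj : β j ≠ 0)
    (hαβ : ∏ ℓ ∈ Ioc t N, (1 - α ℓ * β j) ≠ 0) (dk : ℂ) {dl : ℂ} (hdl : dl ≠ 0) (x : ℕ) :
    ((∏ i ∈ Icc 1 N, (1 - α i * β j)) * ∏ s ∈ (Icc 1 N).erase j, (1 - β s / β j)) / (dk * dl) *
        (nodalWeight (Icc 1 N) β j * (β j ^ x * (β j ^ (N - 1) * dl) *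
          ∏ ℓ ∈ Ioc t N, (1 - α ℓ * β j)⁻¹))
      = (∏ i ∈ Icc 1 t, (1 - α i * β j)) * β j ^ x / dk := by
  have hw := nodalWeight_mul_prod_one_sub_div hinj hj hβj
  rw [Nat.card_Icc, Nat.add_sub_cancel] at hw
  have hsplit : ∏ i ∈ Icc 1 N, (1 - α i * β j)
      = (∏ i ∈ Icc 1 t, (1 - α i * β j)) * ∏ ℓ ∈ Ioc t N, (1 - α ℓ * β j) := by
    rw [show Icc 1 N = Ioc 0 N from Icc_add_one_left_eq_Ioc 0 N,
      show Icc 1 t = Ioc 0 t from Icc_add_one_left_eq_Ioc 0 t,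
      prod_Ioc_consecutive _ (Nat.zero_le t) ht]
  set P₂ := ∏ ℓ ∈ Ioc t N, (1 - α ℓ * β j)
  calc _ = (nodalWeight (Icc 1 N) β j * ∏ s ∈ (Icc 1 N).erase j, (1 - β s / β j)) *
          β j ^ (N - 1) * (dl * dl⁻¹) * (P₂ * P₂⁻¹) *
          ((∏ i ∈ Icc 1 t, (1 - α i * β j)) * β j ^ x / dk) := by
        rw [hsplit, prod_inv_distrib]
        ring
    _ = _ := by
        rw [hw, inv_mul_cancel₀ (pow_ne_zero _ hβj), mul_inv_cancel₀ hdl, mul_inv_cancel₀ hαβ]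
        ring

theorem general_formula_general (N : ℕ) (α β : ℕ → ℂ)
    (hα : ∀ i, 1 ≤ i → i ≤ N → ‖α i‖ < 1)
    (hβ : ∀ i, 1 ≤ i → i ≤ N → 0 < ‖β i‖ ∧ ‖β i‖ < 1)
    (hdist : ∀ i j, 1 ≤ i → i ≤ N → 1 ≤ j → j ≤ N → i ≠ j → β i ≠ β j)
    (κ lam : ℕ → ℤ)
    (hlam : ∀ i j, 1 ≤ i → i < j → j ≤ N → lam i < lam j)
    (hlamN : lam N ≤ (N : ℤ) - 1)
    (hhl : hdet N lam (fun i => (β i)⁻¹) ≠ 0)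
    (s₁ s₂ : ℕ) (hs₁ : s₁ ≤ N) (hs₂ : s₂ ≤ N) (x₁ x₂ : ℕ) :
    -(if s₂ < s₁ then (1 : ℂ) else 0) * (1 / (2 * (Real.pi : ℂ) * Complex.I)) *
        (∮ z in C(0, 1),
          (∏ j ∈ Finset.Icc (s₂ + 1) s₁, Ffun N α β j z) * z ^ (-((x₁ : ℤ) - x₂ + 1)))
      + ∑ j ∈ Finset.Icc 1 N,
          ((∏ i ∈ Finset.Icc 1 N, (1 - α i * β j)) *
              ∏ s ∈ (Finset.Icc 1 N).erase j, (1 - β s / β j)) /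
              (hdet N κ β * hdet N lam (fun i => (β i)⁻¹)) *
            ((1 / (2 * (Real.pi : ℂ) * Complex.I)) *
              ∮ z in C(0, 1),
                hdetSub N κ β j z * (∏ l ∈ Finset.Icc 1 s₁, Ffun N α β l z) *
                  z ^ (-((x₁ : ℤ) + 1))) *
            ((1 / (2 * (Real.pi : ℂ) * Complex.I)) *
              ∮ z in C(0, 1),
                hdetSub N lam (fun i => (β i)⁻¹) j z⁻¹ *
                  (∏ l ∈ Finset.Icc (s₂ + 1) (2 * N), Ffun N α β l z) *
                  z ^ ((x₂ : ℤ) - 1))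
    = -(if s₂ < s₁ then (1 : ℂ) else 0) * (1 / (2 * (Real.pi : ℂ) * Complex.I)) *
          (∮ z in C(0, 1),
            (∏ j ∈ Finset.Icc (s₂ + 1) s₁, (1 - α j * z)⁻¹) * z ^ (-((x₁ : ℤ) - x₂ + 1)))
      + ∑ j ∈ Finset.Icc 1 N,
          (1 / (2 * (Real.pi : ℂ) * Complex.I)) *
            ∮ z in C(0, 1),
              (hdetSub N κ β j z / hdet N κ β) *
                (∏ i ∈ Finset.Icc 1 s₂, (1 - α i * β j)) * β j ^ x₂ *
                (∏ l ∈ Finset.Icc 1 s₁, (1 - α l * z)⁻¹) * z ^ (-((x₁ : ℤ) + 1)) := by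
  have hα' : ∀ ℓ ∈ Ioc s₂ N, ‖α ℓ‖ < 1 := fun ℓ hℓ =>
    hα ℓ (by simp only [mem_Ioc] at hℓ; omega) (mem_Ioc.1 hℓ).2
  have hβ' : ∀ r ∈ Icc 1 N, β r ≠ 0 ∧ ‖β r‖ < 1 := fun r hr =>
    (hβ r (mem_Icc.1 hr).1 (mem_Icc.1 hr).2).imp_left norm_pos_iff.1
  have hinj : Set.InjOn β (Icc 1 N) := fun i hi j hj hij => by_contra fun hne =>
    hdist i j (mem_Icc.1 hi).1 (mem_Icc.1 hi).2 (mem_Icc.1 hj).1 (mem_Icc.1 hj).2 hne hij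
  have hlam' : ∀ i ∈ Icc 1 N, lam i ≤ (N : ℤ) - 1 := fun i hi => by
    obtain ⟨h1, h2⟩ := mem_Icc.1 hi
    rcases h2.lt_or_eq with h | rfl
    · exact (hlam i N h1 h le_rfl).le.trans hlamN
    · exact hlamN
  simp only [prod_Ffun_eq_of_le (s := Icc (s₂ + 1) s₁) fun ℓ hℓ => (mem_Icc.1 hℓ).2.trans hs₁]
  congr 1
  refine sum_congr rfl fun j hj => ?_
  obtain ⟨j, rfl⟩ : ∃ j' : Fin N, (j' : ℕ) + 1 = j :=
    ⟨⟨j - 1, by simp only [mem_Icc] at hj; omega⟩, by simp only [mem_Icc] at hj ⊢; omega⟩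
  have hαβ : ∏ ℓ ∈ Ioc s₂ N, (1 - α ℓ * β (j + 1)) ≠ 0 := prod_ne_zero_iff.2 fun ℓ hℓ =>
    one_sub_mul_ne_zero_of_norm_lt (hα' ℓ hℓ) (hβ' _ hj).2.le
  have hκ_integral : (∮ z in C(0, 1), (hdetSub N κ β (j + 1) z / hdet N κ β) *
        (∏ i ∈ Icc 1 s₂, (1 - α i * β (j + 1))) * β (j + 1) ^ x₂ *
        (∏ l ∈ Icc 1 s₁, (1 - α l * z)⁻¹) * z ^ (-((x₁ : ℤ) + 1)))
      = (∏ i ∈ Icc 1 s₂, (1 - α i * β (j + 1))) * β (j + 1) ^ x₂ / hdet N κ β *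
        ∮ z in C(0, 1), hdetSub N κ β (j + 1) z * (∏ l ∈ Icc 1 s₁, Ffun N α β l z) *
          z ^ (-((x₁ : ℤ) + 1)) := by
    rw [← circleIntegral.integral_const_mul]
    congr 1
    funext z
    rw [prod_Ffun_eq_of_le (fun ℓ hℓ => (mem_Icc.1 hℓ).2.trans hs₁) z]
    ring
  rw [hκ_integral, circleIntegral_hdetSub_inv_mul_prod_Ffun hs₂ hα' hβ' hinj hlam' x₂ j,
    ← eynardMehta_weight_mul_residue hs₂ hj hinj (hβ' _ hj).1 hαβ (hdet N κ β) hhl x₂]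
  have h2πI : 2 * (π : ℂ) * I ≠ 0 := by simp [Real.pi_ne_zero]
  rw [one_div, inv_mul_cancel_left₀ h2πI]
  ring

/-- Theorem 1 of the paper, the identity between the Eynard–Mehta form (2.14)
of the kernel (with diagonalized Gramm matrix) and its simplified form (2.15) valid for
`s₁, s₂ ≤ N`.  All circle integrals are over the positively oriented unit circle. -/
theorem general_formula (N : ℕ) (hN : 1 ≤ N) (α β : ℕ → ℂ)
    (hα : ∀ i, 1 ≤ i → i ≤ N → ‖α i‖ < 1)
    (hβ : ∀ i, 1 ≤ i → i ≤ N → 0 < ‖β i‖ ∧ ‖β i‖ < 1)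
    (hdist : ∀ i j, 1 ≤ i → i ≤ N → 1 ≤ j → j ≤ N → i ≠ j → β i ≠ β j)
    (κ lam : ℕ → ℤ) (hκ0 : κ 1 = 0)
    (hκ : ∀ i j, 1 ≤ i → i < j → j ≤ N → κ i < κ j)
    (hlam : ∀ i j, 1 ≤ i → i < j → j ≤ N → lam i < lam j)
    (hlamN : lam N ≤ (N : ℤ) - 1)
    (hhk : hdet N κ β ≠ 0) (hhl : hdet N lam (fun i => (β i)⁻¹) ≠ 0)
    (s₁ s₂ : ℕ) (hs₁ : s₁ ≤ N) (hs₂ : s₂ ≤ N) (x₁ x₂ : ℕ) :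
    -(if s₂ < s₁ then (1 : ℂ) else 0) * (1 / (2 * (Real.pi : ℂ) * Complex.I)) *
        (∮ z in C(0, 1),
          (∏ j ∈ Finset.Icc (s₂ + 1) s₁, Ffun N α β j z) * z ^ (-((x₁ : ℤ) - x₂ + 1)))
      + ∑ j ∈ Finset.Icc 1 N,
          ((∏ i ∈ Finset.Icc 1 N, (1 - α i * β j)) *
              ∏ s ∈ (Finset.Icc 1 N).erase j, (1 - β s / β j)) /
              (hdet N κ β * hdet N lam (fun i => (β i)⁻¹)) *
            ((1 / (2 * (Real.pi : ℂ) * Complex.I)) *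
              ∮ z in C(0, 1),
                hdetSub N κ β j z * (∏ l ∈ Finset.Icc 1 s₁, Ffun N α β l z) *
                  z ^ (-((x₁ : ℤ) + 1))) *
            ((1 / (2 * (Real.pi : ℂ) * Complex.I)) *
              ∮ z in C(0, 1),
                hdetSub N lam (fun i => (β i)⁻¹) j z⁻¹ *
                  (∏ l ∈ Finset.Icc (s₂ + 1) (2 * N), Ffun N α β l z) *
                  z ^ ((x₂ : ℤ) - 1))
    = -(if s₂ < s₁ then (1 : ℂ) else 0) * (1 / (2 * (Real.pi : ℂ) * Complex.I)) *
          (∮ z in C(0, 1),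
            (∏ j ∈ Finset.Icc (s₂ + 1) s₁, (1 - α j * z)⁻¹) * z ^ (-((x₁ : ℤ) - x₂ + 1)))
      + ∑ j ∈ Finset.Icc 1 N,
          (1 / (2 * (Real.pi : ℂ) * Complex.I)) *
            ∮ z in C(0, 1),
              (hdetSub N κ β j z / hdet N κ β) *
                (∏ i ∈ Finset.Icc 1 s₂, (1 - α i * β j)) * β j ^ x₂ *
                (∏ l ∈ Finset.Icc 1 s₁, (1 - α l * z)⁻¹) * z ^ (-((x₁ : ℤ) + 1)) :=
  general_formula_general N α β hα hβ hdist κ lam hlam hlamN hhl s₁ s₂ hs₁ hs₂ x₁ x₂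
end

section
/- Let N, k ≥ 1 be integers, let α_1,…,α_N ∈ ℂ with |α_ℓ| < 1, and let β_1,…,β_N be nonzero complex numbers with 0 < |β_j| < 1 whose k-th powers β_1^k,…,β_N^k are pairwise distinct. Set k_j = k(j−1) for j = 1,…,N. For each j choose ε_j > 0 such that the closed disk {|w−β_j| ≤ ε_j} is contained in the open unit disk and contains no point ω_k^m β_t with (m,t) ≠ (0,j) (0 ≤ m ≤ k−1, 1 ≤ t ≤ N) and does not contain 0, where ω_k = e^{2πi/k}. Then for all integers s_1, s_2 with 0 ≤ s_1, s_2 ≤ N and all x_1, x_2 ∈ ℕ: Σ_{j=1}^N (1/2πi)∮_{|z|=1} [h_{0,k,2k,…,(N−1)k}(β; β_j↦z)/h_{0,k,2k,…,(N−1)k}(β)] · ∏_{r=1}^{s_2}(1−α_r β_j) · β_j^{x_2} · ∏_{ℓ=1}^{s_1}(1−α_ℓ z)^{−1} z^{−(x_1+1)} dz = (k/(2πi)^2) ∮_{|z|=1} Σ_{j=1}^N ∮_{|w−β_j|=ε_j} [∏_{r=1}^{s_2}(1−α_r w) · ∏_{t=1}^N(z^k−β_t^k)] / [∏_{ℓ=1}^{s_1}(1−α_ℓ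 z) · ∏_{t=1}^N(w^k−β_t^k)] · w^{x_2+k−1} z^{−(x_1+1)} (z^k−w^k)^{−1} dw dz. -/
/-- The alternating determinant `h_{κ(1),…,κ(N)}(β) = det(β_j^{κ_i})_{i,j=1}^N`, with
natural-number exponents; the sequences `κ` and `β` are 1-indexed. -/
noncomputable def hdetN (N : ℕ) (κ : ℕ → ℕ) (β : ℕ → ℂ) : ℂ :=
  Matrix.det (Matrix.of fun i j : Fin N => β ((j : ℕ) + 1) ^ κ ((i : ℕ) + 1))

/-- The determinant `h_{κ(1),…,κ(N)}(β; β_{j₀} ↦ z)`: the matrix `(β_j^{κ_i})` with the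
`j₀`-th column replaced by `(z^{κ_i})_i`, with natural-number exponents. -/
noncomputable def hdetSubN (N : ℕ) (κ : ℕ → ℕ) (β : ℕ → ℂ) (j₀ : ℕ) (z : ℂ) : ℂ :=
  Matrix.det (Matrix.of fun i j : Fin N =>
    if (j : ℕ) + 1 = j₀ then z ^ κ ((i : ℕ) + 1) else β ((j : ℕ) + 1) ^ κ ((i : ℕ) + 1))

/-- The primitive `k`-th root of unity `ω_k = e^{2πi/k}`. -/
noncomputable def omegaK (k : ℕ) : ℂ := Complex.exp (2 * Real.pi * Complex.I / k)

/-!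
For `z` on the unit circle the `w`-integrand is `F w / ∏ₜ (w ^ k - β t ^ k)` with `F` holomorphic
on the disk around `β j`, where the denominator has the single simple zero `β j`. Its residue is
`F (β j) / (k β_j^(k-1) ∏_{t ≠ j} (β_j^k - β_t^k))`; the factor `z ^ k - β j ^ k` of
`∏ₜ (z ^ k - β t ^ k)` cancels the pole `(z ^ k - w ^ k)⁻¹`, and what remains is the Lagrange
quotient `∏_{t ≠ j} (z^k - β_t^k) / (β_j^k - β_t^k)`. Both determinants are Vandermonde
determinants in the `k`-th powers, so this quotient is `h(β; β_j ↦ z) / h(β)`.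
-/

open Finset Metric Matrix Function

section Vandermonde

variable {n : ℕ}

theorem prod_Ioi_ite_eq_prod_erase {M : Type*} [CommMonoid M] (p : Fin n) (f : Fin n → M) :
    ∏ i, ∏ j ∈ Ioi i, (if i = p then f j else if j = p then f i else 1) =
      ∏ t ∈ univ.erase p, f t := by
  have row : ∀ i, ∏ j ∈ Ioi i, (if i = p then f j else if j = p then f i else 1) =
      (if i = p then ∏ j ∈ Ioi p, f j else 1) * (if i < p then f i else 1) := by
    intro i
    rcases lt_trichotomy i p with h | rfl | h
    · simp [h.ne, h, prod_ite_eq']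
    · simp
    · simp [h.ne', h.not_gt, prod_ite_eq']
  rw [Fintype.prod_congr _ _ row, prod_mul_distrib, Fintype.prod_ite_eq', ← prod_filter,
    ← prod_filter_mul_prod_filter_not (univ.erase p) (p < ·)]
  congr 2 <;> ext t <;> simp only [mem_Ioi, mem_filter, mem_univ, mem_erase] <;> grind

theorem det_vandermonde_update_mul {R : Type*} [CommRing R] (v : Fin n → R) (p : Fin n) (c : R) :
    (vandermonde (update v p c)).det * ∏ t ∈ univ.erase p, (v p - v t) =
      (vandermonde v).det * ∏ t ∈ univ.erase p, (c - v t) := by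
  -- compare pair by pair: only the pairs `i < j` containing `p` differ
  rw [det_vandermonde, det_vandermonde, ← prod_Ioi_ite_eq_prod_erase p,
    ← prod_Ioi_ite_eq_prod_erase p, ← prod_mul_distrib, ← prod_mul_distrib]
  refine prod_congr rfl fun i _ => ?_
  rw [← prod_mul_distrib, ← prod_mul_distrib]
  refine prod_congr rfl fun j hj => ?_
  have hij : i ≠ j := (mem_Ioi.1 hj).ne
  by_cases hi : i = p
  · subst hi
    simp [update_of_ne hij.symm]
    ring
  · by_cases hj : j = p
    · subst hj
      simp [hi]
      ring
    · simp [hi, hj]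

theorem det_vandermonde_update_div {K : Type*} [Field K] {v : Fin n → K} (hv : Injective v)
    (p : Fin n) (c : K) :
    (vandermonde (update v p c)).det / (vandermonde v).det =
      ∏ t ∈ univ.erase p, (c - v t) / (v p - v t) := by
  have hp : ∏ t ∈ univ.erase p, (v p - v t) ≠ 0 :=
    prod_ne_zero_iff.2 fun t ht => sub_ne_zero.2 (hv.ne (ne_of_mem_erase ht).symm)
  rw [prod_div_distrib, div_eq_div_iff (det_vandermonde_ne_zero_iff.2 hv) hp,
    det_vandermonde_update_mul, mul_comm]

end Vandermonde

theorem hdetN_eq_det_vandermonde (N k : ℕ) (β : ℕ → ℂ) :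
    hdetN N (fun i => k * (i - 1)) β = (vandermonde fun t : Fin N => β (t + 1) ^ k).det := by
  rw [hdetN, ← det_transpose]
  congr 1
  ext i j
  simp [pow_mul]

theorem hdetSubN_eq_det_vandermonde (N k : ℕ) (β : ℕ → ℂ) (p : Fin N) (z : ℂ) :
    hdetSubN N (fun i => k * (i - 1)) β (p + 1) z =
      (vandermonde (update (fun t : Fin N => β (t + 1) ^ k) p (z ^ k))).det := by
  rw [hdetSubN, ← det_transpose]
  congr 1
  ext i j
  by_cases h : i = p
  · simp [h, pow_mul]
  · simp [h, pow_mul, Fin.val_ne_iff.2 h]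

@[fun_prop]
theorem continuous_hdetSubN (N : ℕ) (κ : ℕ → ℕ) (β : ℕ → ℂ) (j : ℕ) :
    Continuous (hdetSubN N κ β j) :=
  (continuous_matrix fun _ _ => by dsimp only [of_apply]; split_ifs <;> fun_prop).matrix_det

theorem hdetSubN_div_hdetN {N k j : ℕ} {β : ℕ → ℂ}
    (hβ : Set.InjOn (fun t => β t ^ k) (Set.Icc 1 N)) (hj : j ∈ Icc 1 N) (z : ℂ) :
    hdetSubN N (fun i => k * (i - 1)) β j z / hdetN N (fun i => k * (i - 1)) β =
      ∏ t ∈ (Icc 1 N).erase j, (z ^ k - β t ^ k) / (β j ^ k - β t ^ k) := by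
  let e : Fin N ↪ ℕ := Fin.valEmbedding.trans (addRightEmbedding 1)
  have he : ∀ t, e t = t + 1 := fun _ => rfl
  have hIcc : Icc 1 N = univ.map e := by
    ext t
    simp only [mem_Icc, mem_map, mem_univ, true_and, he]
    exact ⟨fun h => ⟨⟨t - 1, by omega⟩, by simp; omega⟩, fun ⟨a, ha⟩ => by omega⟩
  obtain ⟨p, -, rfl⟩ := mem_map.1 (hIcc ▸ hj)
  have hinj : Injective fun t : Fin N => β (t + 1) ^ k := fun a b h =>
    e.injective (hβ (by simp [he]) (by simp [he]) h)
  rw [hIcc, ← map_erase, prod_map]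
  exact hdetSubN_eq_det_vandermonde N k β p z ▸ hdetN_eq_det_vandermonde N k β ▸
    det_vandermonde_update_div hinj p (z ^ k)

theorem exists_eq_omegaK_pow_mul_of_pow_eq {k : ℕ} (hk : k ≠ 0) {w b : ℂ} (h : w ^ k = b ^ k) :
    ∃ m < k, w = omegaK k ^ m * b := by
  rcases eq_or_ne b 0 with rfl | hb
  · exact ⟨0, Nat.pos_of_ne_zero hk, by simpa [hk] using h⟩
  have : NeZero k := ⟨hk⟩
  obtain ⟨m, hm, hωm⟩ := (Complex.isPrimitiveRoot_exp k hk).eq_pow_of_pow_eq_one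
    (ξ := w / b) (by rw [div_pow, h, div_self (pow_ne_zero _ hb)])
  exact ⟨m, hm, by rw [omegaK, hωm, div_mul_cancel₀ _ hb]⟩

theorem eq_of_pow_eq_of_forall_ne_omegaK_pow_mul {k N j t : ℕ} {β : ℕ → ℂ} {w : ℂ} (hk : k ≠ 0)
    (havoid : ∀ m t, m ≤ k - 1 → 1 ≤ t → t ≤ N → ¬(m = 0 ∧ t = j) → w ≠ omegaK k ^ m * β t)
    (ht : t ∈ Icc 1 N) (hwt : w ^ k = β t ^ k) : t = j ∧ w = β j := by
  obtain ⟨m, hm, rfl⟩ := exists_eq_omegaK_pow_mul_of_pow_eq hk hwt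
  by_contra hne
  exact havoid m t (by omega) (mem_Icc.1 ht).1 (mem_Icc.1 ht).2
    (fun h => hne ⟨h.2, by simp [h.1, h.2]⟩) rfl

theorem circleIntegral_div_eq_of_hasDerivAt {g h : ℂ → ℂ} {b h' : ℂ} {R : ℝ} (hR : 0 < R)
    (hg : DifferentiableOn ℂ g (closedBall b R)) (hh : DifferentiableOn ℂ h (closedBall b R))
    (hb : h b = 0) (hd : HasDerivAt h h' b) (hh' : h' ≠ 0)
    (hne : ∀ w ∈ closedBall b R, w ≠ b → h w ≠ 0) :
    ∮ w in C(b, R), g w / h w = 2 * Real.pi * Complex.I * (g b / h') := by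
  have hfac : ∀ w, h w = (w - b) * dslope h b w := fun w => by
    simpa [hb] using (sub_smul_dslope h b w).symm
  have hslope : ∀ w ∈ closedBall b R, dslope h b w ≠ 0 := by
    intro w hw
    rcases eq_or_ne w b with rfl | hwb
    · rwa [dslope_same, hd.deriv]
    · exact right_ne_zero_of_mul (hfac w ▸ hne w hw hwb)
  -- `g / dslope h b` is holomorphic on the whole disk (removable singularity at `b`)
  have hdiff : DifferentiableOn ℂ (fun w => g w / dslope h b w) (closedBall b R) :=
    hg.div ((Complex.differentiableOn_dslope (closedBall_mem_nhds b hR)).2 hh) hslope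
  have key := hdiff.circleIntegral_sub_inv_smul (mem_ball_self hR)
  simp only [smul_eq_mul, dslope_same, hd.deriv] at key
  rw [← key]
  refine circleIntegral.integral_congr hR.le fun w _ => ?_
  rw [hfac, div_eq_mul_inv, div_eq_mul_inv, mul_inv]
  ring

theorem circleIntegral_div_prod_pow_sub {ι : Type*} [DecidableEq ι] {s : Finset ι} {β : ι → ℂ}
    {k : ℕ} {j : ι} {F : ℂ → ℂ} {R : ℝ} (hk : k ≠ 0) (hβj : β j ≠ 0) (hj : j ∈ s) (hR : 0 < R)
    (hF : DifferentiableOn ℂ F (closedBall (β j) R))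
    (hroots : ∀ w ∈ closedBall (β j) R, ∀ t ∈ s, w ^ k = β t ^ k → t = j ∧ w = β j) :
    ∮ w in C(β j, R), F w / ∏ t ∈ s, (w ^ k - β t ^ k) =
      2 * Real.pi * Complex.I *
        (F (β j) / (∏ t ∈ s.erase j, (β j ^ k - β t ^ k)) / (k * β j ^ (k - 1))) := by
  have hQ : ∀ w ∈ closedBall (β j) R, ∏ t ∈ s.erase j, (w ^ k - β t ^ k) ≠ 0 :=
    fun w hw => prod_ne_zero_iff.2 fun t ht => sub_ne_zero.2 fun h =>
      ne_of_mem_erase ht (hroots w hw t (mem_of_mem_erase ht) h).1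
  have hsplit : ∀ w, F w / ∏ t ∈ s, (w ^ k - β t ^ k) =
      F w / (∏ t ∈ s.erase j, (w ^ k - β t ^ k)) / (w ^ k - β j ^ k) := fun w => by
    rw [← mul_prod_erase s _ hj, div_div, mul_comm (w ^ k - β j ^ k)]
  simp only [hsplit]
  exact circleIntegral_div_eq_of_hasDerivAt hR
    (hF.div (DifferentiableOn.fun_finsetProd fun _ _ => by fun_prop) hQ) (by fun_prop) (sub_self _)
    ((hasDerivAt_pow k (β j)).sub_const _) (by simp [hk, hβj])
    fun w hw hwβ h => hwβ (hroots w hw j hj (sub_eq_zero.1 h)).2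

theorem circleIntegrable_mul_prod_inv_mul_zpow {ι : Type*} {f : ℂ → ℂ} (hf : Continuous f)
    {s : Finset ι} {α : ι → ℂ} (hα : ∀ l ∈ s, ‖α l‖ < 1) (n : ℤ) :
    CircleIntegrable (fun z => f z * (∏ l ∈ s, (1 - α l * z)⁻¹) * z ^ n) 0 1 := by
  have hz0 : ∀ z ∈ sphere (0 : ℂ) 1, z ≠ 0 ∨ 0 ≤ n := fun z hz =>
    Or.inl (ne_zero_of_mem_unit_sphere ⟨z, hz⟩)
  have hprod : ∀ z ∈ sphere (0 : ℂ) 1, ∏ l ∈ s, (1 - α l * z) ≠ 0 := fun z hz =>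
    prod_ne_zero_iff.2 fun l hl h => (hα l hl).ne <| by
      simpa [norm_mul, mem_sphere_zero_iff_norm.1 hz] using congrArg norm (sub_eq_zero.1 h).symm
  simp only [prod_inv_distrib]
  exact ContinuousOn.circleIntegrable zero_le_one
    (by fun_prop (disch := first | exact hz0 | exact hprod))

theorem inner_circleIntegral_eq_residue {N k s₁ s₂ x₂ j : ℕ} {α β : ℕ → ℂ} {R : ℝ} {z : ℂ} {n : ℤ}
    (hk : k ≠ 0) (hβ : Set.InjOn (fun t => β t ^ k) (Set.Icc 1 N)) (hj : j ∈ Icc 1 N)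
    (hβj : β j ≠ 0) (hR : 0 < R) (hR1 : closedBall (β j) R ⊆ ball 0 1)
    (hroots : ∀ w ∈ closedBall (β j) R, ∀ t ∈ Icc 1 N, w ^ k = β t ^ k → t = j ∧ w = β j)
    (hz : ‖z‖ = 1) :
    ∮ w in C(β j, R),
        ((∏ i ∈ Icc 1 s₂, (1 - α i * w)) * ∏ t ∈ Icc 1 N, (z ^ k - β t ^ k)) /
            ((∏ l ∈ Icc 1 s₁, (1 - α l * z)) * ∏ t ∈ Icc 1 N, (w ^ k - β t ^ k)) *
          (w ^ (x₂ + k - 1) * z ^ n * (z ^ k - w ^ k)⁻¹) =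
      2 * Real.pi * Complex.I / k *
        (hdetSubN N (fun i => k * (i - 1)) β j z / hdetN N (fun i => k * (i - 1)) β *
          (∏ i ∈ Icc 1 s₂, (1 - α i * β j)) * β j ^ x₂ *
          (∏ l ∈ Icc 1 s₁, (1 - α l * z)⁻¹) * z ^ n) := by
  have hzw : ∀ w ∈ closedBall (β j) R, z ^ k - w ^ k ≠ 0 := fun w hw h => by
    have hw1 : ‖w‖ < 1 := mem_ball_zero_iff.1 (hR1 hw)
    have : ‖w‖ ^ k = 1 := by rw [← norm_pow, ← sub_eq_zero.1 h, norm_pow, hz, one_pow]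
    exact (pow_lt_one₀ (norm_nonneg w) hw1 hk).ne this
  set F : ℂ → ℂ := fun w => (∏ i ∈ Icc 1 s₂, (1 - α i * w)) * (∏ t ∈ Icc 1 N, (z ^ k - β t ^ k)) /
    (∏ l ∈ Icc 1 s₁, (1 - α l * z)) * (w ^ (x₂ + k - 1) * z ^ n * (z ^ k - w ^ k)⁻¹) with hF
  have hF_diff : DifferentiableOn ℂ F (closedBall (β j) R) := by
    fun_prop (disch := exact hzw)
  have hintegrand : ∀ w, ((∏ i ∈ Icc 1 s₂, (1 - α i * w)) * ∏ t ∈ Icc 1 N, (z ^ k - β t ^ k)) /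
            ((∏ l ∈ Icc 1 s₁, (1 - α l * z)) * ∏ t ∈ Icc 1 N, (w ^ k - β t ^ k)) *
          (w ^ (x₂ + k - 1) * z ^ n * (z ^ k - w ^ k)⁻¹) =
      F w / ∏ t ∈ Icc 1 N, (w ^ k - β t ^ k) := fun w => by
    simp only [hF]; ring
  simp only [hintegrand]
  rw [circleIntegral_div_prod_pow_sub hk hβj hj hR hF_diff hroots, hdetSubN_div_hdetN hβ hj,
    prod_div_distrib]
  simp only [hF, ← mul_prod_erase (Icc 1 N) (fun t => z ^ k - β t ^ k) hj, prod_inv_distrib]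
  rw [show x₂ + k - 1 = x₂ + (k - 1) by omega, pow_add]
  have hzβ := hzw (β j) (mem_closedBall_self hR.le)
  field_simp
  simp only [mul_comm _ (α _)]
  ring

theorem equal_spacing_double_integral_general (N k : ℕ) (hk : 1 ≤ k)
    (α β : ℕ → ℂ)
    (hα : ∀ l, 1 ≤ l → l ≤ N → ‖α l‖ < 1)
    (hβ : ∀ i, 1 ≤ i → i ≤ N → 0 < ‖β i‖ ∧ ‖β i‖ < 1)
    (hdist : ∀ i j, 1 ≤ i → i ≤ N → 1 ≤ j → j ≤ N → i ≠ j → β i ^ k ≠ β j ^ k)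
    (ε : ℕ → ℝ)
    (hε : ∀ j, 1 ≤ j → j ≤ N → 0 < ε j ∧
      ∀ w : ℂ, ‖w - β j‖ ≤ ε j →
        ‖w‖ < 1 ∧ w ≠ 0 ∧
          ∀ m t, m ≤ k - 1 → 1 ≤ t → t ≤ N → ¬(m = 0 ∧ t = j) →
            w ≠ (omegaK k) ^ m * β t)
    (s₁ s₂ : ℕ) (hs₁ : s₁ ≤ N) (x₁ x₂ : ℕ) :
    (∑ j ∈ Finset.Icc 1 N,
        (1 / (2 * (Real.pi : ℂ) * Complex.I)) *
          ∮ z in C(0, 1),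
            (hdetSubN N (fun i => k * (i - 1)) β j z / hdetN N (fun i => k * (i - 1)) β) *
              (∏ i ∈ Finset.Icc 1 s₂, (1 - α i * β j)) * β j ^ x₂ *
              (∏ l ∈ Finset.Icc 1 s₁, (1 - α l * z)⁻¹) * z ^ (-((x₁ : ℤ) + 1)))
      = ((k : ℂ) / (2 * (Real.pi : ℂ) * Complex.I) ^ 2) *
          ∮ z in C(0, 1), ∑ j ∈ Finset.Icc 1 N,
            ∮ w in C(β j, ε j),
              ((∏ i ∈ Finset.Icc 1 s₂, (1 - α i * w)) *
                  ∏ t ∈ Finset.Icc 1 N, (z ^ k - β t ^ k)) /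
                  ((∏ l ∈ Finset.Icc 1 s₁, (1 - α l * z)) *
                    ∏ t ∈ Finset.Icc 1 N, (w ^ k - β t ^ k)) *
                (w ^ (x₂ + k - 1) * z ^ (-((x₁ : ℤ) + 1)) * (z ^ k - w ^ k)⁻¹) := by
  have hk0 : k ≠ 0 := by omega
  have hinj : Set.InjOn (fun t => β t ^ k) (Set.Icc 1 N) := fun i hi j hj h =>
    not_not.1 fun hij => hdist i j hi.1 hi.2 hj.1 hj.2 hij h
  have hα' : ∀ l ∈ Icc 1 s₁, ‖α l‖ < 1 := fun l hl =>
    hα l (mem_Icc.1 hl).1 ((mem_Icc.1 hl).2.trans hs₁)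
  have hβ' : ∀ j ∈ Icc 1 N, β j ≠ 0 := fun j hj =>
    norm_pos_iff.1 (hβ j (mem_Icc.1 hj).1 (mem_Icc.1 hj).2).1
  have hε' : ∀ j ∈ Icc 1 N, 0 < ε j ∧ ∀ w ∈ closedBall (β j) (ε j), ‖w‖ < 1 ∧ w ≠ 0 ∧
      ∀ m t, m ≤ k - 1 → 1 ≤ t → t ≤ N → ¬(m = 0 ∧ t = j) → w ≠ omegaK k ^ m * β t :=
    fun j hj => (hε j (mem_Icc.1 hj).1 (mem_Icc.1 hj).2).imp_right
      fun h w hw => h w (mem_closedBall_iff_norm.1 hw)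
  rw [circleIntegral.integral_congr zero_le_one fun z hz => sum_congr rfl fun j hj =>
    inner_circleIntegral_eq_residue hk0 hinj hj (hβ' j hj) (hε' j hj).1
      (fun w hw => mem_ball_zero_iff.2 ((hε' j hj).2 w hw).1)
      (fun w hw t ht => eq_of_pow_eq_of_forall_ne_omegaK_pow_mul hk0 ((hε' j hj).2 w hw).2.2 ht)
      (mem_sphere_zero_iff_norm.1 hz)]
  simp only [← mul_sum]
  rw [circleIntegral.integral_const_mul, circleIntegral.integral_fun_sum fun j _ =>
    circleIntegrable_mul_prod_inv_mul_zpow (by fun_prop) hα' _, ← mul_assoc]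
  congr 1
  field_simp

/-- Theorem 2 of the paper (equation (2.17)): in the equally spaced case
`k_j = k(j−1)`, the sum of single contour integrals equals the double contour integral, the
`w`-integration being over small circles `|w − β_j| = ε_j` around the `β_j` avoiding the
other zeros of `w^k − β_t^k`. -/
theorem equal_spacing_double_integral (N k : ℕ) (hN : 1 ≤ N) (hk : 1 ≤ k)
    (α β : ℕ → ℂ)
    (hα : ∀ l, 1 ≤ l → l ≤ N → ‖α l‖ < 1)
    (hβ : ∀ i, 1 ≤ i → i ≤ N → 0 < ‖β i‖ ∧ ‖β i‖ < 1)
    (hdist : ∀ i j, 1 ≤ i → i ≤ N → 1 ≤ j → j ≤ N → i ≠ j → β i ^ k ≠ β j ^ k)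
    (ε : ℕ → ℝ)
    (hε : ∀ j, 1 ≤ j → j ≤ N → 0 < ε j ∧
      ∀ w : ℂ, ‖w - β j‖ ≤ ε j →
        ‖w‖ < 1 ∧ w ≠ 0 ∧
          ∀ m t, m ≤ k - 1 → 1 ≤ t → t ≤ N → ¬(m = 0 ∧ t = j) →
            w ≠ (omegaK k) ^ m * β t)
    (s₁ s₂ : ℕ) (hs₁ : s₁ ≤ N) (hs₂ : s₂ ≤ N) (x₁ x₂ : ℕ) :
    (∑ j ∈ Finset.Icc 1 N,
        (1 / (2 * (Real.pi : ℂ) * Complex.I)) *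
          ∮ z in C(0, 1),
            (hdetSubN N (fun i => k * (i - 1)) β j z / hdetN N (fun i => k * (i - 1)) β) *
              (∏ i ∈ Finset.Icc 1 s₂, (1 - α i * β j)) * β j ^ x₂ *
              (∏ l ∈ Finset.Icc 1 s₁, (1 - α l * z)⁻¹) * z ^ (-((x₁ : ℤ) + 1)))
      = ((k : ℂ) / (2 * (Real.pi : ℂ) * Complex.I) ^ 2) *
          ∮ z in C(0, 1), ∑ j ∈ Finset.Icc 1 N,
            ∮ w in C(β j, ε j),
              ((∏ i ∈ Finset.Icc 1 s₂, (1 - α i * w)) *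
                  ∏ t ∈ Finset.Icc 1 N, (z ^ k - β t ^ k)) /
                  ((∏ l ∈ Finset.Icc 1 s₁, (1 - α l * z)) *
                    ∏ t ∈ Finset.Icc 1 N, (w ^ k - β t ^ k)) *
                (w ^ (x₂ + k - 1) * z ^ (-((x₁ : ℤ) + 1)) * (z ^ k - w ^ k)⁻¹) :=
  equal_spacing_double_integral_general N k hk α β hα hβ hdist ε hε s₁ s₂ hs₁ x₁ x₂
end

section
/- Fix an integer k ≥ 3 and γ ∈ (0,1), and set ω_k = e^{2πi/k}. Then there exists a constant C > 0 such that for every t ∈ [−π, π] and every integer j with |j| ≤ k/2: (1 + Cπj(πj+t)/k²) · |1 − γe^{it/k}| ≤ |1 − ω_k^j γ e^{it/k}|. -/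
/-!
Put `a = πj/k` and `b = (πj + t)/k`, so that the two moduli are `|1 - γe^{i(b-a)}|` and
`|1 - γe^{i(a+b)}|`. Their squares differ by `2γ(cos(b - a) - cos(a + b)) = 4γ sin a sin b`.
The constraints on `j` and `t` give `|a| ≤ π/2`, `|b| ≤ 5π/6` and `ab ≥ 0`, and there Jordan's
inequality yields `sin a sin b ≥ 4ab/(5π²)`. Since `|1 - γe^{i(b-a)}| ≤ 2`, this gap in the squares
absorbs the factor `(1 + Cab)²` once `C = γ/(5π²)`.
-/

open Real

namespace Real

lemma two_div_pi_mul_min_le_sin {x : ℝ} (hx₀ : 0 ≤ x) (hx : x ≤ π) :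
    2 / π * min x (π - x) ≤ sin x := by
  rcases le_total x (π / 2) with h | h
  · exact (mul_le_mul_of_nonneg_left (min_le_left _ _) (by positivity)).trans (mul_le_sin hx₀ h)
  · rw [← sin_pi_sub]
    exact (mul_le_mul_of_nonneg_left (min_le_right _ _) (by positivity)).trans
      (mul_le_sin (by linarith) (by linarith))

lemma mul_le_sin_of_le_five_pi_div_six {x : ℝ} (hx₀ : 0 ≤ x) (hx : x ≤ 5 * π / 6) :
    2 / (5 * π) * x ≤ sin x := by
  have hπ := pi_pos
  refine le_trans ?_ (two_div_pi_mul_min_le_sin hx₀ (by linarith))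
  rw [show 2 / (5 * π) * x = 2 / π * (x / 5) by field_simp]
  gcongr
  exact le_min (by linarith) (by linarith)

lemma mul_le_sin_mul_sin_of_nonneg {a b : ℝ} (ha₀ : 0 ≤ a) (ha : a ≤ π / 2) (hb₀ : 0 ≤ b)
    (hb : b ≤ 5 * π / 6) : 4 / (5 * π ^ 2) * (a * b) ≤ sin a * sin b := by
  have hπ := pi_pos
  calc 4 / (5 * π ^ 2) * (a * b) = 2 / π * a * (2 / (5 * π) * b) := by field_simp; ring
    _ ≤ sin a * sin b :=
      mul_le_mul (mul_le_sin ha₀ ha) (mul_le_sin_of_le_five_pi_div_six hb₀ hb) (by positivity)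
        (sin_nonneg_of_nonneg_of_le_pi ha₀ (by linarith))

lemma mul_le_sin_mul_sin {a b : ℝ} (ha : |a| ≤ π / 2) (hb : |b| ≤ 5 * π / 6) (hab : 0 ≤ a * b) :
    4 / (5 * π ^ 2) * (a * b) ≤ sin a * sin b := by
  rcases le_total 0 a with ha₀ | ha₀
  · rcases ha₀.eq_or_lt with rfl | ha₀
    · simp
    have hb₀ : 0 ≤ b := nonneg_of_mul_nonneg_right hab ha₀
    rw [abs_of_nonneg ha₀.le] at ha
    rw [abs_of_nonneg hb₀] at hb
    exact mul_le_sin_mul_sin_of_nonneg ha₀.le ha hb₀ hb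
  · rcases ha₀.eq_or_lt with rfl | ha₀
    · simp
    have hb₀ : b ≤ 0 := nonpos_of_mul_nonneg_right hab ha₀
    rw [abs_of_nonpos ha₀.le] at ha
    rw [abs_of_nonpos hb₀] at hb
    simpa only [sin_neg, neg_mul_neg] using
      mul_le_sin_mul_sin_of_nonneg (neg_nonneg.2 ha₀.le) ha (neg_nonneg.2 hb₀) hb

end Real

lemma Complex.norm_one_sub_mul_exp_sq (γ x : ℝ) :
    ‖1 - (γ : ℂ) * exp (x * I)‖ ^ 2 = 1 - 2 * γ * Real.cos x + γ ^ 2 := by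
  rw [Complex.sq_norm, normSq_apply]
  simp only [sub_re, one_re, mul_re, ofReal_re, exp_ofReal_mul_I_re, ofReal_im,
    exp_ofReal_mul_I_im, zero_mul, sub_zero, sub_im, one_im, mul_im, add_zero, zero_sub]
  linear_combination γ ^ 2 * Real.sin_sq_add_cos_sq x

lemma Complex.norm_one_sub_mul_exp_add_sq_sub (γ a b : ℝ) :
    ‖1 - (γ : ℂ) * exp ((a + b : ℝ) * I)‖ ^ 2 - ‖1 - (γ : ℂ) * exp ((b - a : ℝ) * I)‖ ^ 2 =
      4 * γ * (Real.sin a * Real.sin b) := by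
  rw [norm_one_sub_mul_exp_sq, norm_one_sub_mul_exp_sq, Real.cos_add, Real.cos_sub]
  ring

lemma one_add_mul_mul_norm_one_sub_mul_exp_le {γ a b : ℝ} (hγ : γ ∈ Set.Ioo (0 : ℝ) 1)
    (ha : |a| ≤ π / 2) (hb : |b| ≤ 5 * π / 6) (hab : 0 ≤ a * b) :
    (1 + γ / (5 * π ^ 2) * (a * b)) * ‖1 - (γ : ℂ) * Complex.exp ((b - a : ℝ) * Complex.I)‖ ≤
      ‖1 - (γ : ℂ) * Complex.exp ((a + b : ℝ) * Complex.I)‖ := by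
  obtain ⟨hγ₀, hγ₁⟩ := hγ
  have hπ := pi_pos
  set A := ‖1 - (γ : ℂ) * Complex.exp ((b - a : ℝ) * Complex.I)‖
  set B := ‖1 - (γ : ℂ) * Complex.exp ((a + b : ℝ) * Complex.I)‖
  set C := γ / (5 * π ^ 2)
  have hA : A ≤ 2 := by
    refine (norm_sub_le _ _).trans ?_
    rw [norm_one, norm_mul, Complex.norm_exp_ofReal_mul_I, Complex.norm_real, Real.norm_eq_abs,
      abs_of_pos hγ₀]
    linarith
  have hgap : 4 * γ * (4 / (5 * π ^ 2) * (a * b)) ≤ B ^ 2 - A ^ 2 := by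
    rw [Complex.norm_one_sub_mul_exp_add_sq_sub]
    exact mul_le_mul_of_nonneg_left (mul_le_sin_mul_sin ha hb hab) (by positivity)
  have hCab : C * (a * b) ≤ 1 := by
    have : a * b ≤ π ^ 2 := by
      calc a * b ≤ |a| * |b| := by rw [← abs_mul]; exact le_abs_self _
        _ ≤ π * π := mul_le_mul (by linarith) (by linarith) (abs_nonneg _) hπ.le
        _ = π ^ 2 := by ring
    calc C * (a * b) ≤ C * π ^ 2 := by gcongr
      _ ≤ 1 := by simp only [C]; field_simp; linarith
  have hCab₀ : 0 ≤ C * (a * b) := by positivity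
  have hgap' : 4 * γ * (4 / (5 * π ^ 2) * (a * b)) = 16 * (C * (a * b)) := by
    simp only [C]; field_simp; ring
  -- `(1 + Cab)² A² ≤ A² + 3 Cab · A² ≤ A² + 12 Cab ≤ B²`
  have hsq : ((1 + C * (a * b)) * A) ^ 2 ≤ B ^ 2 := by
    nlinarith [mul_le_mul_of_nonneg_left (pow_le_pow_left₀ (norm_nonneg _) hA 2) hCab₀,
      mul_nonneg hCab₀ (sq_nonneg A), mul_nonneg (mul_nonneg hCab₀ (sub_nonneg.2 hCab))
        (sq_nonneg A)]
  exact (pow_le_pow_iff_left₀ (by positivity) (norm_nonneg _) two_ne_zero).1 hsq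

lemma pi_mul_intCast_mul_add_nonneg (j : ℤ) {t : ℝ} (ht : |t| ≤ π) :
    0 ≤ π * j * (π * j + t) := by
  have hπ := pi_pos
  obtain ⟨ht₁, ht₂⟩ := abs_le.1 ht
  rcases lt_trichotomy j 0 with hj | rfl | hj
  · have : (j : ℝ) ≤ -1 := by exact_mod_cast Int.le_sub_one_of_lt hj
    exact mul_nonneg_of_nonpos_of_nonpos (by nlinarith) (by nlinarith)
  · simp
  · have : (1 : ℝ) ≤ j := by exact_mod_cast hj
    exact mul_nonneg (by positivity) (by nlinarith)

lemma omegaK_zpow_mul_exp (k : ℕ) (hk : k ≠ 0) (j : ℤ) (x : ℝ) :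
    omegaK k ^ j * Complex.exp (x * Complex.I) =
      Complex.exp ((2 * π * j / k + x : ℝ) * Complex.I) := by
  rw [omegaK, ← Complex.exp_int_mul, ← Complex.exp_add]
  congr 1
  push_cast
  field_simp

/-- for `k ≥ 3` and `γ ∈ (0,1)` there is a constant `C > 0` such that for every
`t ∈ [−π, π]` and every integer `j` with `|j| ≤ k/2`,
`(1 + Cπj(πj+t)/k²)·|1 − γe^{it/k}| ≤ |1 − ω_k^j γ e^{it/k}|`. -/
theorem angle_lemma (k : ℕ) (hk : 3 ≤ k) (γ : ℝ) (hγ : γ ∈ Set.Ioo (0 : ℝ) 1) :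
    ∃ C : ℝ, 0 < C ∧
      ∀ t : ℝ, t ∈ Set.Icc (-Real.pi) Real.pi → ∀ j : ℤ, 2 * |j| ≤ (k : ℤ) →
        (1 + C * Real.pi * (j : ℝ) * (Real.pi * (j : ℝ) + t) / (k : ℝ) ^ 2) *
            ‖1 - (γ : ℂ) * Complex.exp ((t / k : ℝ) * Complex.I)‖ ≤
          ‖1 - (omegaK k) ^ j * (γ : ℂ) * Complex.exp ((t / k : ℝ) * Complex.I)‖ := by
  have hπ := pi_pos
  refine ⟨γ / (5 * π ^ 2), by have := hγ.1; positivity, ?_⟩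
  intro t ht j hj
  replace ht : |t| ≤ π := abs_le.2 ht
  have hk₀ : (0 : ℝ) < k := by positivity
  have hk₃ : (3 : ℝ) ≤ k := by exact_mod_cast hk
  have hjk : 2 * |(j : ℝ)| ≤ k := by exact_mod_cast hj
  set a := π * j / k
  set b := (π * j + t) / k
  rw [mul_right_comm (omegaK k ^ j), omegaK_zpow_mul_exp k (by positivity), mul_comm _ (γ : ℂ),
    show 2 * π * j / k + t / k = a + b by ring, show t / k = b - a by ring,
    show γ / (5 * π ^ 2) * π * j * (π * j + t) / k ^ 2 = γ / (5 * π ^ 2) * (a * b) by ring]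
  refine one_add_mul_mul_norm_one_sub_mul_exp_le hγ ?_ ?_ ?_
  · rw [abs_div, abs_mul, abs_of_pos hπ, abs_of_pos hk₀, div_le_iff₀ hk₀]
    nlinarith
  · rw [abs_div, abs_of_pos hk₀, div_le_iff₀ hk₀]
    calc |π * j + t| ≤ |π * j| + |t| := abs_add_le _ _
      _ ≤ π * |(j : ℝ)| + π := by rw [abs_mul, abs_of_pos hπ]; gcongr
      _ ≤ 5 * π / 6 * k := by nlinarith
  · rw [show a * b = π * j * (π * j + t) / k ^ 2 by ring]
    exact div_nonneg (pi_mul_intCast_mul_add_nonneg j ht) (by positivity)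
end

section
/- Let N ≥ 1 and k ≥ 1 be integers, let β_1,…,β_N be nonzero complex numbers whose k-th powers are pairwise distinct, let j ∈ {1,…,N}, let s_2 ∈ ℕ and α_1,…,α_{s_2} ∈ ℂ, let x_2 ∈ ℕ, and let z ∈ ℂ with z^k ≠ β_j^k. Choose ε > 0 such that the closed disk {|w − β_j| ≤ ε} contains no solution of w^k = β_ℓ^k other than w = β_j (for any ℓ ∈ {1,…,N}) and no solution of w^k = z^k. Then (k/2πi) ∮_{|w−β_j|=ε} ∏_{r=1}^{s_2}(1−α_r w) · w^{x_2+k−1} / [∏_{ℓ=1}^{N}(w^k − β_ℓ^k) · (z^k − w^k)] dw = ∏_{r=1}^{s_2}(1−α_r β_j) · β_j^{x_2} / [∏_{ℓ=1, ℓ≠j}^{N}(β_j^k − β_ℓ^k) · (z^k − β_j^k)]. -/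
/-!
Factor `w ^ k - β_j ^ k = (w - β_j) · ∑_{i<k} wⁱ β_j^(k-1-i)`. On the disk the second factor and
the remaining factors of the denominator do not vanish, so Cauchy's integral formula evaluates the
integral as `2πi` times the rest of the integrand at `β_j`, where the second factor equals
`k β_j^(k-1)`; this cancels the `k` in front and `k - 1` powers of `β_j` in the numerator.
-/

open Finset Metric Complex Real

lemma geom_sum₂_ne_zero_of_pow_eq_pow_imp {R : Type*} [CommRing R] [IsDomain R] [CharZero R]
    {k : ℕ} {c w : R} (hk : k ≠ 0) (hc : c ≠ 0) (hroot : w ^ k = c ^ k → w = c) :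
    ∑ i ∈ range k, w ^ i * c ^ (k - 1 - i) ≠ 0 := by
  intro h0
  have hwc : w = c := hroot <| by
    rw [← sub_eq_zero, ← geom_sum₂_mul, h0, zero_mul]
  rw [hwc, geom_sum₂_self] at h0
  exact mul_ne_zero (Nat.cast_ne_zero.mpr hk) (pow_ne_zero _ hc) h0

theorem circleIntegral_div_pow_sub_pow_mul {f q : ℂ → ℂ} {c : ℂ} {R : ℝ} {k : ℕ}
    (hR : 0 < R) (hk : k ≠ 0) (hc : c ≠ 0)
    (hf : DifferentiableOn ℂ f (closedBall c R)) (hq : DifferentiableOn ℂ q (closedBall c R))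
    (hq0 : ∀ w ∈ closedBall c R, q w ≠ 0)
    (hroot : ∀ w ∈ closedBall c R, w ^ k = c ^ k → w = c) :
    (∮ w in C(c, R), f w / ((w ^ k - c ^ k) * q w))
      = 2 * π * I * f c / (k * c ^ (k - 1) * q c) := by
  set h : ℂ → ℂ := fun w => ∑ i ∈ range k, w ^ i * c ^ (k - 1 - i)
  have hh0 : ∀ w ∈ closedBall c R, h w ≠ 0 := fun w hw =>
    geom_sum₂_ne_zero_of_pow_eq_pow_imp hk hc (hroot w hw)
  have hsimple : (∮ w in C(c, R), f w / ((w ^ k - c ^ k) * q w))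
      = ∮ w in C(c, R), (w - c)⁻¹ • (f w / (h w * q w)) := by
    refine circleIntegral.integral_congr hR.le fun w _ => ?_
    rw [← geom_sum₂_mul, smul_eq_mul, inv_mul_eq_div, div_div, mul_right_comm]
  have hdiff : DifferentiableOn ℂ (fun w => f w / (h w * q w)) (closedBall c R) :=
    hf.div ((Differentiable.fun_sum fun i _ => by fun_prop).differentiableOn.mul hq)
      fun w hw => mul_ne_zero (hh0 w hw) (hq0 w hw)
  rw [hsimple, hdiff.circleIntegral_sub_inv_smul (mem_ball_self hR), smul_eq_mul, mul_div_assoc,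
    show h c = k * c ^ (k - 1) from geom_sum₂_self c k]

theorem residue_computation_general (N k : ℕ) (hk : 1 ≤ k) (β : ℕ → ℂ)
    (hβ : ∀ i, 1 ≤ i → i ≤ N → β i ≠ 0)
    (hdist : ∀ i j, 1 ≤ i → i ≤ N → 1 ≤ j → j ≤ N → i ≠ j → β i ^ k ≠ β j ^ k)
    (j : ℕ) (hj : 1 ≤ j) (hjN : j ≤ N) (s₂ : ℕ) (α : ℕ → ℂ) (x₂ : ℕ) (z : ℂ)
    (ε : ℝ) (hε : 0 < ε)
    (hεdisk : ∀ w : ℂ, ‖w - β j‖ ≤ ε →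
      (∀ l, 1 ≤ l → l ≤ N → w ^ k = β l ^ k → w = β j) ∧ w ^ k ≠ z ^ k) :
    ((k : ℂ) / (2 * (Real.pi : ℂ) * Complex.I)) *
        (∮ w in C(β j, ε),
          (∏ i ∈ Finset.Icc 1 s₂, (1 - α i * w)) * w ^ (x₂ + k - 1) /
            ((∏ l ∈ Finset.Icc 1 N, (w ^ k - β l ^ k)) * (z ^ k - w ^ k)))
      = (∏ i ∈ Finset.Icc 1 s₂, (1 - α i * β j)) * β j ^ x₂ /
          ((∏ l ∈ (Finset.Icc 1 N).erase j, (β j ^ k - β l ^ k)) * (z ^ k - β j ^ k)) := by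
  have hjmem : j ∈ Icc 1 N := mem_Icc.mpr ⟨hj, hjN⟩
  have hβj : β j ≠ 0 := hβ j hj hjN
  have hk0 : k ≠ 0 := by omega
  have hdisk : ∀ w ∈ closedBall (β j) ε, _ := fun w hw => hεdisk w (mem_closedBall_iff_norm.mp hw)
  have hq0 : ∀ w ∈ closedBall (β j) ε,
      (∏ l ∈ (Icc 1 N).erase j, (w ^ k - β l ^ k)) * (z ^ k - w ^ k) ≠ 0 := by
    intro w hw
    obtain ⟨hroots, hzw⟩ := hdisk w hw
    refine mul_ne_zero (prod_ne_zero_iff.mpr fun l hl => sub_ne_zero.mpr fun hwl => ?_)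
      (sub_ne_zero.mpr hzw.symm)
    obtain ⟨hlj, hl1, hlN⟩ := And.imp_right mem_Icc.mp (mem_erase.mp hl)
    rw [hroots l hl1 hlN hwl] at hwl
    exact hdist j l hj hjN hl1 hlN hlj.symm hwl
  have hβpow : β j ^ (x₂ + k - 1) = β j ^ (k - 1) * β j ^ x₂ := by
    rw [← pow_add]; congr 1; omega
  simp_rw [← mul_prod_erase _ _ hjmem, mul_assoc]
  rw [circleIntegral_div_pow_sub_pow_mul hε hk0 hβj (by fun_prop) (by fun_prop) hq0
    (fun w hw => (hdisk w hw).1 j hj hjN), hβpow]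
  field_simp
  simp only [mul_comm (α _)]

/-- the residue computation (3.23) of the paper.  The integral is over the
positively oriented circle `|w − β_j| = ε`. -/
theorem residue_computation (N k : ℕ) (hN : 1 ≤ N) (hk : 1 ≤ k) (β : ℕ → ℂ)
    (hβ : ∀ i, 1 ≤ i → i ≤ N → β i ≠ 0)
    (hdist : ∀ i j, 1 ≤ i → i ≤ N → 1 ≤ j → j ≤ N → i ≠ j → β i ^ k ≠ β j ^ k)
    (j : ℕ) (hj : 1 ≤ j) (hjN : j ≤ N) (s₂ : ℕ) (α : ℕ → ℂ) (x₂ : ℕ) (z : ℂ)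
    (hz : z ^ k ≠ β j ^ k) (ε : ℝ) (hε : 0 < ε)
    (hεdisk : ∀ w : ℂ, ‖w - β j‖ ≤ ε →
      (∀ l, 1 ≤ l → l ≤ N → w ^ k = β l ^ k → w = β j) ∧ w ^ k ≠ z ^ k) :
    ((k : ℂ) / (2 * (Real.pi : ℂ) * Complex.I)) *
        (∮ w in C(β j, ε),
          (∏ i ∈ Finset.Icc 1 s₂, (1 - α i * w)) * w ^ (x₂ + k - 1) /
            ((∏ l ∈ Finset.Icc 1 N, (w ^ k - β l ^ k)) * (z ^ k - w ^ k)))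
      = (∏ i ∈ Finset.Icc 1 s₂, (1 - α i * β j)) * β j ^ x₂ /
          ((∏ l ∈ (Finset.Icc 1 N).erase j, (β j ^ k - β l ^ k)) * (z ^ k - β j ^ k)) :=
  residue_computation_general N k hk β hβ hdist j hj hjN s₂ α x₂ z ε hε hεdisk
end

section
/- Fix an integer k ≥ 2 and γ ∈ (0,1), and set ω_k = e^{2πi/k}. Then lim_{S→∞} Σ_{j=1}^{k−1} ∫_{−π}^{π} |(1 − γe^{it/k}) / (1 − ω_k^j γ e^{it/k})|^S dt = 0, where S ranges over the positive integers. -/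
/-!
Since `‖1 - γ e^{iθ}‖² = 1 - 2γ cos θ + γ²` and `ω_k^j e^{iθ} = e^{i(θ + 2πj/k)}`, the integrand is
`(‖1 - γ e^{iθ}‖ / ‖1 - γ e^{i(θ + 2πj/k)}‖)^S` with `θ = t/k ∈ (-π/k, π/k)`. For `1 ≤ j ≤ k - 1` the
angle `θ + 2πj/k` lies in `(π/k, 2π - π/k)`, where the cosine is below `cos (π/k) < cos θ`, so the
base is `< 1` on the open interval and the integrals tend to `0` by dominated convergence (bound `1`).
-/

open Real Filter Topology MeasureTheory Set
open scoped Interval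

lemma norm_one_sub_mul_exp_sq (γ θ : ℝ) :
    ‖1 - (γ : ℂ) * Complex.exp (θ * Complex.I)‖ ^ 2 = 1 - 2 * γ * cos θ + γ ^ 2 := by
  rw [← Complex.normSq_eq_norm_sq, Complex.exp_mul_I]
  simp [Complex.normSq_apply, ← Complex.ofReal_cos, ← Complex.ofReal_sin]
  nlinarith [sin_sq_add_cos_sq θ]

lemma one_sub_mul_exp_ne_zero {γ : ℝ} (hγ : |γ| ≠ 1) (θ : ℝ) :
    1 - (γ : ℂ) * Complex.exp (θ * Complex.I) ≠ 0 := by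
  rw [sub_ne_zero]
  intro h
  apply hγ
  simpa [Complex.norm_exp_ofReal_mul_I] using congrArg norm h.symm

lemma norm_one_sub_mul_exp_lt {γ θ φ : ℝ} (hγ : 0 < γ) (hcos : cos φ < cos θ) :
    ‖1 - (γ : ℂ) * Complex.exp (θ * Complex.I)‖ < ‖1 - (γ : ℂ) * Complex.exp (φ * Complex.I)‖ := by
  rw [← pow_lt_pow_iff_left₀ (norm_nonneg _) (norm_nonneg _) two_ne_zero,
    norm_one_sub_mul_exp_sq, norm_one_sub_mul_exp_sq]
  nlinarith

lemma omegaK_pow_mul_exp (k j : ℕ) (θ : ℝ) :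
    omegaK k ^ j * Complex.exp (θ * Complex.I) =
      Complex.exp ((θ + 2 * π * j / k : ℝ) * Complex.I) := by
  rw [omegaK, ← Complex.exp_nat_mul, ← Complex.exp_add]
  push_cast
  ring_nf

lemma one_sub_omegaK_pow_mul_mul_exp_ne_zero (k j : ℕ) {γ : ℝ} (hγ : |γ| ≠ 1) (θ : ℝ) :
    1 - omegaK k ^ j * (γ : ℂ) * Complex.exp (θ * Complex.I) ≠ 0 := by
  rw [mul_comm _ (γ : ℂ), mul_assoc, omegaK_pow_mul_exp]
  exact one_sub_mul_exp_ne_zero hγ _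

lemma cos_le_cos_of_le_of_le_two_pi_sub {δ x : ℝ} (hδ : 0 ≤ δ) (hδx : δ ≤ x)
    (hx : x ≤ 2 * π - δ) : cos x ≤ cos δ := by
  rcases le_or_gt x π with hxπ | hπx
  · exact cos_le_cos_of_nonneg_of_le_pi hδ hxπ hδx
  · rw [← cos_two_pi_sub x]
    exact cos_le_cos_of_nonneg_of_le_pi hδ (by linarith) (by linarith)

lemma cos_add_lt_cos {θ δ ψ : ℝ} (hθ : |θ| < δ) (hψ : 2 * δ ≤ ψ) (hψ' : ψ ≤ 2 * π - 2 * δ) :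
    cos (θ + ψ) < cos θ := by
  have hδ : 0 < δ := (abs_nonneg θ).trans_lt hθ
  obtain ⟨hθl, hθu⟩ := abs_lt.mp hθ
  calc cos (θ + ψ) ≤ cos δ :=
        cos_le_cos_of_le_of_le_two_pi_sub hδ.le (by linarith) (by linarith)
    _ < cos |θ| := cos_lt_cos_of_nonneg_of_le_pi (abs_nonneg θ) (by linarith) hθ
    _ = cos θ := cos_abs θ

lemma norm_one_sub_div_one_sub_omegaK_pow_lt_one {k j : ℕ} (hj : j ∈ Finset.Icc 1 (k - 1))
    {γ : ℝ} (hγ : γ ∈ Ioo (0 : ℝ) 1) {t : ℝ} (ht : t ∈ Ioo (-π) π) :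
    ‖(1 - (γ : ℂ) * Complex.exp ((t / k : ℝ) * Complex.I)) /
      (1 - omegaK k ^ j * (γ : ℂ) * Complex.exp ((t / k : ℝ) * Complex.I))‖ < 1 := by
  obtain ⟨hj1, hjk⟩ := Finset.mem_Icc.mp hj
  have hk : (0 : ℝ) < k := by exact_mod_cast (show 0 < k by omega)
  have hj1' : (1 : ℝ) ≤ j := by exact_mod_cast hj1
  have hjk' : (j : ℝ) + 1 ≤ k := by exact_mod_cast (show j + 1 ≤ k by omega)
  have hγ1 : |γ| ≠ 1 := by rw [abs_of_pos hγ.1]; exact hγ.2.ne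
  rw [norm_div, div_lt_one (norm_pos_iff.mpr (one_sub_omegaK_pow_mul_mul_exp_ne_zero k j hγ1 _)),
    mul_comm _ (γ : ℂ), mul_assoc, omegaK_pow_mul_exp]
  refine norm_one_sub_mul_exp_lt hγ.1 (cos_add_lt_cos (δ := π / k) ?_ ?_ ?_)
  · rw [abs_div, abs_of_pos hk, div_lt_div_iff_of_pos_right hk]
    exact abs_lt.mpr ht
  · rw [mul_div_assoc', div_le_div_iff_of_pos_right hk]
    nlinarith [pi_pos]
  · rw [show 2 * π - 2 * (π / k) = 2 * π * (k - 1) / k by field_simp,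
      div_le_div_iff_of_pos_right hk]
    nlinarith [pi_pos]

lemma tendsto_intervalIntegral_pow_of_abs_lt_one {f : ℝ → ℝ} {a b : ℝ}
    (hf : AEStronglyMeasurable f (volume.restrict (Ι a b)))
    (hf_lt : ∀ t ∈ uIoo a b, |f t| < 1) :
    Tendsto (fun n : ℕ => ∫ t in a..b, f t ^ n) atTop (𝓝 0) := by
  have hae : ∀ᵐ t, t ∈ Ι a b → t ∈ uIoo a b := by
    filter_upwards [measure_eq_zero_iff_ae_notMem.mp (Real.volume_singleton (a := max a b))]
      with t ht htab
    exact ⟨htab.1, lt_of_le_of_ne htab.2 ht⟩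
  simpa using intervalIntegral.tendsto_integral_filter_of_dominated_convergence (fun _ => 1)
    (.of_forall fun n => hf.pow n)
    (.of_forall fun n => hae.mono fun t ht htab => by
      simpa [abs_pow] using pow_le_one₀ (abs_nonneg _) (hf_lt t (ht htab)).le)
    intervalIntegrable_const
    (hae.mono fun t ht htab => tendsto_pow_atTop_nhds_zero_of_abs_lt_one (hf_lt t (ht htab)))

theorem sum_integral_ratio_tendsto_zero_general (k : ℕ) (γ : ℝ)
    (hγ : γ ∈ Set.Ioo (0 : ℝ) 1) :
    Filter.Tendsto (fun S : ℕ =>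
        ∑ j ∈ Finset.Icc 1 (k - 1), ∫ t in (-Real.pi)..Real.pi,
          (‖(1 - (γ : ℂ) * Complex.exp ((t / k : ℝ) * Complex.I)) /
              (1 - (omegaK k) ^ j * (γ : ℂ) * Complex.exp ((t / k : ℝ) * Complex.I))‖) ^ S)
      Filter.atTop (nhds 0) := by
  have hγ1 : |γ| ≠ 1 := by rw [abs_of_pos hγ.1]; exact hγ.2.ne
  have huIoo : uIoo (-π) π = Ioo (-π) π := by
    rw [uIoo, inf_of_le_left (by linarith [pi_pos]), sup_of_le_right (by linarith [pi_pos])]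
  rw [← Finset.sum_const_zero (s := Finset.Icc 1 (k - 1))]
  refine tendsto_finsetSum _ fun j hj => tendsto_intervalIntegral_pow_of_abs_lt_one
    (Continuous.aestronglyMeasurable ?_) fun t ht => ?_
  · exact continuous_norm.comp (.div (by fun_prop) (by fun_prop) fun t =>
      one_sub_omegaK_pow_mul_mul_exp_ne_zero k j hγ1 _)
  · rw [abs_norm]
    exact norm_one_sub_div_one_sub_omegaK_pow_lt_one hj hγ (huIoo ▸ ht)

/-- for a fixed integer `k ≥ 2` and `γ ∈ (0,1)`,
`lim_{S→∞} Σ_{j=1}^{k−1} ∫_{−π}^{π} |(1 − γe^{it/k})/(1 − ω_k^j γ e^{it/k})|^S dt = 0`. -/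
theorem sum_integral_ratio_tendsto_zero (k : ℕ) (hk : 2 ≤ k) (γ : ℝ)
    (hγ : γ ∈ Set.Ioo (0 : ℝ) 1) :
    Filter.Tendsto (fun S : ℕ =>
        ∑ j ∈ Finset.Icc 1 (k - 1), ∫ t in (-Real.pi)..Real.pi,
          (‖(1 - (γ : ℂ) * Complex.exp ((t / k : ℝ) * Complex.I)) /
              (1 - (omegaK k) ^ j * (γ : ℂ) * Complex.exp ((t / k : ℝ) * Complex.I))‖) ^ S)
      Filter.atTop (nhds 0) :=
  sum_integral_ratio_tendsto_zero_general k γ hγ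
end
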